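/- arXiv:1311.2097 — 6 statements merged into one kernel-verified Lean document; each statement's English description precedes it below -/
import Mathlib

section
/- Suppose u : ℝ → ℝ is continuous and strictly increasing, x₀ ∈ ℝ, and the utility-based shortfall of X equals m* ∈ ℝ, i.e., sup{ m ∈ ℝ | Σ_i μ(i) u(X(i) − m) ≥ x₀ } = m* with the supremum over a nonempty set bounded above. Then Σ_i μ(i) u(X(i) − m*) = x₀. -/
/-! The acceptance set `{m | x₀ ≤ f m}` of the continuous function
`f m = ∑ i, μ i * u (X i - m)` is closed, so it contains its supremum `m*`. If the
inequality at `m*` were strict, continuity would keep it strict slightly to the right of `m*`,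
contradicting maximality. -/

open Filter Topology

theorem Continuous.apply_csSup_setOf_le_eq {α β : Type*} [ConditionallyCompleteLinearOrder α]
    [TopologicalSpace α] [OrderTopology α] [DenselyOrdered α] [NoMaxOrder α]
    [LinearOrder β] [TopologicalSpace β] [OrderClosedTopology β]
    {f : α → β} (hf : Continuous f) {c : β}
    (hne : {m | c ≤ f m}.Nonempty) (hbdd : BddAbove {m | c ≤ f m}) :
    f (sSup {m | c ≤ f m}) = c := by
  set s := sSup {m | c ≤ f m}
  have hmem : c ≤ f s := (isClosed_le continuous_const hf).csSup_mem hne hbdd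
  refine le_antisymm ?_ hmem
  by_contra! hlt
  have hright : ∀ᶠ m in 𝓝[>] s, c < f m :=
    nhdsWithin_le_nhds ((isOpen_lt continuous_const hf).mem_nhds hlt)
  obtain ⟨m, hm, hsm⟩ := (hright.and self_mem_nhdsWithin).exists
  exact (le_csSup hbdd hm.le).not_gt hsm

theorem stmt_4_general {I : Type*} [Fintype I]
    (μ : I → ℝ)
    (u : ℝ → ℝ) (hu_cont : Continuous u)
    (x₀ : ℝ) (X : I → ℝ) (mstar : ℝ)
    (hne : {m : ℝ | x₀ ≤ ∑ i, μ i * u (X i - m)}.Nonempty)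
    (hbdd : BddAbove {m : ℝ | x₀ ≤ ∑ i, μ i * u (X i - m)})
    (h : sSup {m : ℝ | x₀ ≤ ∑ i, μ i * u (X i - m)} = mstar) :
    ∑ i, μ i * u (X i - mstar) = x₀ := by
  subst h
  exact Continuous.apply_csSup_setOf_le_eq (by fun_prop) hne hbdd

/-- If `u : ℝ → ℝ` is continuous and strictly increasing, and the
utility-based shortfall of `X` equals `m*`, i.e.
`sup { m | ∑ i, μ i * u (X i − m) ≥ x₀ } = m*` where the supremum is over a nonempty
set that is bounded above, then `∑ i, μ i * u (X i − m*) = x₀`. -/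
theorem stmt_4 {I : Type*} [Fintype I] [Nonempty I]
    (μ : I → ℝ) (hμ0 : ∀ i, 0 ≤ μ i) (hμ1 : ∑ i, μ i = 1)
    (u : ℝ → ℝ) (hu_cont : Continuous u) (hu_mono : StrictMono u)
    (x₀ : ℝ) (X : I → ℝ) (mstar : ℝ)
    (hne : {m : ℝ | x₀ ≤ ∑ i, μ i * u (X i - m)}.Nonempty)
    (hbdd : BddAbove {m : ℝ | x₀ ≤ ∑ i, μ i * u (X i - m)})
    (h : sSup {m : ℝ | x₀ ≤ ∑ i, μ i * u (X i - m)} = mstar) :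
    ∑ i, μ i * u (X i - mstar) = x₀ :=
  stmt_4_general μ u hu_cont x₀ X mstar hne hbdd h
end

section
/- Suppose u : ℝ → ℝ is continuous and strictly increasing and u(y₀) = x₀ for some y₀ ∈ ℝ. Then the utility-based shortfall ρ is a valuation function: for every probability distribution μ on I, (monotonicity) if X(i) ≤ Y(i) for all i ∈ I then ρ(X) ≤ ρ(Y), and (translation invariance) ρ(X + y·𝟙) = ρ(X) + y for all y ∈ ℝ, where 𝟙 is the all-ones vector. -/
/-! The acceptance set `{m | x₀ ≤ ∑ i, μ i * u (X i - m)}` grows with `X` and is translated by `y`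
when `X` is. Since `u y₀ = x₀`, it contains `min X - y₀` and is bounded above by `max X - y₀`, so
its supremum is a genuine least upper bound (not Lean's junk `sSup`), and both properties pass to
the suprema. -/

section Shortfall

variable {I : Type*} [Fintype I] (μ : I → ℝ) (u : ℝ → ℝ) (x₀ : ℝ)

def acceptanceSet (X : I → ℝ) : Set ℝ :=
  {m | x₀ ≤ ∑ i, μ i * u (X i - m)}

noncomputable def shortfall (X : I → ℝ) : ℝ :=
  sSup (acceptanceSet μ u x₀ X)

variable {μ u x₀}

lemma weighted_sum_le_weighted_sum (hμ0 : ∀ i, 0 ≤ μ i) {f g : I → ℝ} (hfg : ∀ i, f i ≤ g i) :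
    ∑ i, μ i * f i ≤ ∑ i, μ i * g i :=
  Finset.sum_le_sum fun i _ => mul_le_mul_of_nonneg_left (hfg i) (hμ0 i)

lemma weighted_sum_const (hμ1 : ∑ i, μ i = 1) (c : ℝ) : ∑ i, μ i * c = c := by
  rw [← Finset.sum_mul, hμ1, one_mul]

lemma acceptanceSet_mono (hμ0 : ∀ i, 0 ≤ μ i) (hu : Monotone u) {X Y : I → ℝ}
    (hXY : ∀ i, X i ≤ Y i) : acceptanceSet μ u x₀ X ⊆ acceptanceSet μ u x₀ Y :=
  fun _ hm => hm.trans <| weighted_sum_le_weighted_sum hμ0 fun i => hu (by linarith [hXY i])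

lemma acceptanceSet_add_const (X : I → ℝ) (y : ℝ) :
    acceptanceSet μ u x₀ (fun i => X i + y) = (· + y) '' acceptanceSet μ u x₀ X := by
  ext m
  have shift (i : I) : X i - (m + -y) = X i + y - m := by ring
  simp only [acceptanceSet, Set.image_add_right, Set.mem_preimage, Set.mem_ofPred_eq, shift]

variable [Nonempty I]

lemma acceptanceSet_nonempty (hμ0 : ∀ i, 0 ≤ μ i) (hμ1 : ∑ i, μ i = 1) (hu : Monotone u)
    {y₀ : ℝ} (hy₀ : x₀ ≤ u y₀) (X : I → ℝ) : (acceptanceSet μ u x₀ X).Nonempty := by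
  obtain ⟨j, hj⟩ := Finite.exists_min X
  refine ⟨X j - y₀, ?_⟩
  calc x₀ ≤ u y₀ := hy₀
    _ = ∑ i, μ i * u y₀ := (weighted_sum_const hμ1 _).symm
    _ ≤ ∑ i, μ i * u (X i - (X j - y₀)) :=
      weighted_sum_le_weighted_sum hμ0 fun i => hu (by linarith [hj i])

lemma acceptanceSet_bddAbove (hμ0 : ∀ i, 0 ≤ μ i) (hμ1 : ∑ i, μ i = 1) (hu : StrictMono u)
    {y₀ : ℝ} (hy₀ : u y₀ ≤ x₀) (X : I → ℝ) : BddAbove (acceptanceSet μ u x₀ X) := by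
  obtain ⟨j, hj⟩ := Finite.exists_max X
  refine ⟨X j - y₀, fun m hm => ?_⟩
  have : u y₀ ≤ u (X j - m) :=
    calc u y₀ ≤ x₀ := hy₀
      _ ≤ ∑ i, μ i * u (X i - m) := hm
      _ ≤ ∑ i, μ i * u (X j - m) :=
        weighted_sum_le_weighted_sum hμ0 fun i => hu.monotone (by linarith [hj i])
      _ = u (X j - m) := weighted_sum_const hμ1 _
  linarith [hu.le_iff_le.mp this]

lemma shortfall_mono (hμ0 : ∀ i, 0 ≤ μ i) (hμ1 : ∑ i, μ i = 1) (hu : StrictMono u)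
    {y₀ : ℝ} (hy₀ : u y₀ = x₀) {X Y : I → ℝ} (hXY : ∀ i, X i ≤ Y i) :
    shortfall μ u x₀ X ≤ shortfall μ u x₀ Y :=
  csSup_le_csSup (acceptanceSet_bddAbove hμ0 hμ1 hu hy₀.le Y)
    (acceptanceSet_nonempty hμ0 hμ1 hu.monotone hy₀.ge X) (acceptanceSet_mono hμ0 hu.monotone hXY)

lemma shortfall_add_const (hμ0 : ∀ i, 0 ≤ μ i) (hμ1 : ∑ i, μ i = 1) (hu : StrictMono u)
    {y₀ : ℝ} (hy₀ : u y₀ = x₀) (X : I → ℝ) (y : ℝ) :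
    shortfall μ u x₀ (fun i => X i + y) = shortfall μ u x₀ X + y := by
  rw [shortfall, acceptanceSet_add_const]
  exact ((OrderIso.addRight y).map_csSup' (acceptanceSet_nonempty hμ0 hμ1 hu.monotone hy₀.ge X)
    (acceptanceSet_bddAbove hμ0 hμ1 hu hy₀.le X)).symm

end Shortfall

theorem stmt_5_general {I : Type*} [Fintype I] [Nonempty I]
    (μ : I → ℝ) (hμ0 : ∀ i, 0 ≤ μ i) (hμ1 : ∑ i, μ i = 1)
    (u : ℝ → ℝ) (hu_mono : StrictMono u)
    (y₀ x₀ : ℝ) (hy₀ : u y₀ = x₀) :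
    (∀ X Y : I → ℝ, (∀ i, X i ≤ Y i) →
      sSup {m : ℝ | x₀ ≤ ∑ i, μ i * u (X i - m)} ≤
        sSup {m : ℝ | x₀ ≤ ∑ i, μ i * u (Y i - m)}) ∧
    (∀ (X : I → ℝ) (y : ℝ),
      sSup {m : ℝ | x₀ ≤ ∑ i, μ i * u (X i + y - m)} =
        sSup {m : ℝ | x₀ ≤ ∑ i, μ i * u (X i - m)} + y) :=
  ⟨fun _ _ hXY => shortfall_mono hμ0 hμ1 hu_mono hy₀ hXY,
    fun X y => shortfall_add_const hμ0 hμ1 hu_mono hy₀ X y⟩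

/-- If `u : ℝ → ℝ` is continuous and strictly increasing with
`u y₀ = x₀`, then the utility-based shortfall
`ρ(X) = sup { m | ∑ i, μ i * u (X i − m) ≥ x₀ }` is a valuation function:
it is monotone and translation invariant. -/
theorem stmt_5 {I : Type*} [Fintype I] [Nonempty I]
    (μ : I → ℝ) (hμ0 : ∀ i, 0 ≤ μ i) (hμ1 : ∑ i, μ i = 1)
    (u : ℝ → ℝ) (hu_cont : Continuous u) (hu_mono : StrictMono u)
    (y₀ x₀ : ℝ) (hy₀ : u y₀ = x₀) :
    (∀ X Y : I → ℝ, (∀ i, X i ≤ Y i) →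
      sSup {m : ℝ | x₀ ≤ ∑ i, μ i * u (X i - m)} ≤
        sSup {m : ℝ | x₀ ≤ ∑ i, μ i * u (Y i - m)}) ∧
    (∀ (X : I → ℝ) (y : ℝ),
      sSup {m : ℝ | x₀ ≤ ∑ i, μ i * u (X i + y - m)} =
        sSup {m : ℝ | x₀ ≤ ∑ i, μ i * u (X i - m)} + y) :=
  stmt_5_general μ hμ0 hμ1 u hu_mono y₀ x₀ hy₀
end

section
/- Suppose u : ℝ → ℝ is continuous, strictly increasing, convex, and u(y₀) = x₀ for some y₀ ∈ ℝ. Then the utility-based shortfall ρ is convex in its first argument: for all X, Y : I → ℝ and all α ∈ [0,1], ρ(αX + (1−α)Y) ≤ α ρ(X) + (1−α) ρ(Y). -/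
/-! Convexity of `u` makes `W ↦ ∑ i, μ i * u (W i)` convex, so the set of positions whose expected
utility falls short of `x₀` is convex. Past `ρ(X)` and `ρ(Y)` the shifted positions `X - (ρ(X) + ε)`
and `Y - (ρ(Y) + ε)` are such shortfall positions; choosing `ε` so that their `α`-combination is
`αX + (1 - α)Y - m` shows that no `m > αρ(X) + (1 - α)ρ(Y)` is acceptable for the mixture.
The level `y₀` with `u y₀ = x₀` makes every acceptance set nonempty and bounded above, so the
suprema are genuine. -/

open Finset

section WeightedMean

variable {I : Type*} [Fintype I] {μ : I → ℝ}

theorem sum_mul_lt_of_forall_lt (hμ0 : ∀ i, 0 ≤ μ i) (hμ1 : ∑ i, μ i = 1) {f : I → ℝ} {c : ℝ}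
    (hf : ∀ i, f i < c) : ∑ i, μ i * f i < c :=
  (convex_Iio c).sum_mem (fun i _ => hμ0 i) hμ1 fun i _ => hf i

theorem le_sum_mul_of_forall_le (hμ0 : ∀ i, 0 ≤ μ i) (hμ1 : ∑ i, μ i = 1) {f : I → ℝ} {c : ℝ}
    (hf : ∀ i, c ≤ f i) : c ≤ ∑ i, μ i * f i :=
  (convex_Ici c).sum_mem (fun i _ => hμ0 i) hμ1 fun i _ => hf i

theorem convexOn_sum_mul_comp (hμ0 : ∀ i, 0 ≤ μ i) {u : ℝ → ℝ} (hu : ConvexOn ℝ Set.univ u) :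
    ConvexOn ℝ Set.univ fun W : I → ℝ => ∑ i, μ i * u (W i) := by
  refine ⟨convex_univ, fun W _ V _ a b ha hb hab => ?_⟩
  simp only [Pi.add_apply, Pi.smul_apply, smul_eq_mul, mul_sum, ← sum_add_distrib]
  gcongr with i
  calc μ i * u (a * W i + b * V i) ≤ μ i * (a * u (W i) + b * u (V i)) :=
        mul_le_mul_of_nonneg_left (hu.2 trivial trivial ha hb hab) (hμ0 i)
    _ = a * (μ i * u (W i)) + b * (μ i * u (V i)) := by ring

end WeightedMean

/-- The acceptance set whose supremum is the utility-based shortfall `ρ(X)`. -/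
def shortfallSet {I : Type*} [Fintype I] (μ : I → ℝ) (u : ℝ → ℝ) (x₀ : ℝ) (X : I → ℝ) :
    Set ℝ :=
  {m | x₀ ≤ ∑ i, μ i * u (X i - m)}

section ShortfallSet

variable {I : Type*} [Fintype I] {μ : I → ℝ} {u : ℝ → ℝ} {y₀ x₀ : ℝ}

theorem shortfallSet_nonempty (hμ0 : ∀ i, 0 ≤ μ i) (hμ1 : ∑ i, μ i = 1) (hu : Monotone u)
    (hy₀ : x₀ ≤ u y₀) (X : I → ℝ) : (shortfallSet μ u x₀ X).Nonempty := by
  obtain ⟨L, hL⟩ := (Set.finite_range X).bddBelow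
  refine ⟨L - y₀, le_sum_mul_of_forall_le hμ0 hμ1 fun i => hy₀.trans (hu ?_)⟩
  linarith [hL (Set.mem_range_self i)]

theorem shortfallSet_bddAbove (hμ0 : ∀ i, 0 ≤ μ i) (hμ1 : ∑ i, μ i = 1) (hu : StrictMono u)
    (hy₀ : u y₀ ≤ x₀) (X : I → ℝ) : BddAbove (shortfallSet μ u x₀ X) := by
  obtain ⟨M, hM⟩ := (Set.finite_range X).bddAbove
  refine ⟨M - y₀, fun m hm => not_lt.mp fun hlt => (show x₀ ≤ _ from hm).not_gt ?_⟩
  refine sum_mul_lt_of_forall_lt hμ0 hμ1 fun i => (hu ?_).trans_le hy₀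
  linarith [hM (Set.mem_range_self i)]

end ShortfallSet

theorem stmt_7_general {I : Type*} [Fintype I]
    (μ : I → ℝ) (hμ0 : ∀ i, 0 ≤ μ i) (hμ1 : ∑ i, μ i = 1)
    (u : ℝ → ℝ) (hu_mono : StrictMono u)
    (hu_conv : ConvexOn ℝ Set.univ u)
    (y₀ x₀ : ℝ) (hy₀ : u y₀ = x₀)
    (X Y : I → ℝ) (α : ℝ) (hα0 : 0 ≤ α) (hα1 : α ≤ 1) :
    sSup {m : ℝ | x₀ ≤ ∑ i, μ i * u (α * X i + (1 - α) * Y i - m)} ≤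
      α * sSup {m : ℝ | x₀ ≤ ∑ i, μ i * u (X i - m)} +
        (1 - α) * sSup {m : ℝ | x₀ ≤ ∑ i, μ i * u (Y i - m)} := by
  change sSup (shortfallSet μ u x₀ (α • X + (1 - α) • Y)) ≤
    α * sSup (shortfallSet μ u x₀ X) + (1 - α) * sSup (shortfallSet μ u x₀ Y)
  have hbdd := shortfallSet_bddAbove hμ0 hμ1 hu_mono hy₀.le
  set a := sSup (shortfallSet μ u x₀ X)
  set b := sSup (shortfallSet μ u x₀ Y)
  refine csSup_le (shortfallSet_nonempty hμ0 hμ1 hu_mono.monotone hy₀.ge _) fun m hm => ?_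
  by_contra! hm_gt
  set ε := m - (α * a + (1 - α) * b)
  have hX : a + ε ∉ shortfallSet μ u x₀ X := notMem_of_csSup_lt (by linarith) (hbdd X)
  have hY : b + ε ∉ shortfallSet μ u x₀ Y := notMem_of_csSup_lt (by linarith) (hbdd Y)
  have hmix := (convexOn_sum_mul_comp hμ0 hu_conv).convex_lt x₀
    ⟨trivial, not_le.mp hX⟩ ⟨trivial, not_le.mp hY⟩ hα0 (sub_nonneg.mpr hα1) (by ring)
  refine hmix.2.not_ge (le_of_le_of_eq hm (sum_congr rfl fun i _ => ?_))
  simp only [Pi.add_apply, Pi.smul_apply, smul_eq_mul, ε]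
  congr 2
  ring

/-- If `u : ℝ → ℝ` is continuous, strictly increasing, convex, and
`u y₀ = x₀`, then the utility-based shortfall
`ρ(X) = sup { m | ∑ i, μ i * u (X i − m) ≥ x₀ }` is convex in `X`:
`ρ(αX + (1−α)Y) ≤ α ρ(X) + (1−α) ρ(Y)` for all `α ∈ [0,1]`. -/
theorem stmt_7 {I : Type*} [Fintype I] [Nonempty I]
    (μ : I → ℝ) (hμ0 : ∀ i, 0 ≤ μ i) (hμ1 : ∑ i, μ i = 1)
    (u : ℝ → ℝ) (hu_cont : Continuous u) (hu_mono : StrictMono u)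
    (hu_conv : ConvexOn ℝ Set.univ u)
    (y₀ x₀ : ℝ) (hy₀ : u y₀ = x₀)
    (X Y : I → ℝ) (α : ℝ) (hα0 : 0 ≤ α) (hα1 : α ≤ 1) :
    sSup {m : ℝ | x₀ ≤ ∑ i, μ i * u (α * X i + (1 - α) * Y i - m)} ≤
      α * sSup {m : ℝ | x₀ ≤ ∑ i, μ i * u (X i - m)} +
        (1 - α) * sSup {m : ℝ | x₀ ≤ ∑ i, μ i * u (Y i - m)} :=
  stmt_7_general μ hμ0 hμ1 u hu_mono hu_conv y₀ x₀ hy₀ X Y α hα0 hα1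
end

section
/- Let, for each (s,a) ∈ K, U_{s,a} : ((S × E) → ℝ) → ℝ be monotone (U_{s,a}(X) ≤ U_{s,a}(Y) whenever X ≤ Y pointwise) and translation invariant (U_{s,a}(X + y·𝟙) = U_{s,a}(X) + y for all y ∈ ℝ). Define the operator T on ℝ^S by T(V)(s) = max_{a ∈ A(s)} U_{s,a}( (s',ε) ↦ r(s,a,ε) + γ V(s') ). Then T is a γ-contraction in the sup-norm: max_{s∈S} |T(V)(s) − T(V')(s)| ≤ γ · max_{s∈S} |V(s) − V'(s)| for all V, V' : S → ℝ. -/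
/-!
A monotone, translation-invariant functional `U` is non-expansive for the sup-norm:
`X ≤ Y + c` pointwise gives `U X ≤ U (Y + c) = U Y + c`. Taking `c = γ ‖V - V'‖∞` for the
integrands `r + γ V` and `r + γ V'`, and noting that a maximum over actions preserves such a
one-sided bound, gives `T V ≤ T V' + γ ‖V - V'‖∞`; exchanging `V` and `V'` gives the contraction.
-/

theorem Monotone.le_add_of_le_add {α : Type*} {U : (α → ℝ) → ℝ} (hU : Monotone U)
    (htrans : ∀ (X : α → ℝ) (y : ℝ), U (fun p => X p + y) = U X + y)
    {X Y : α → ℝ} {c : ℝ} (h : ∀ p, X p ≤ Y p + c) : U X ≤ U Y + c :=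
  htrans Y c ▸ hU h

theorem Finset.sup'_le_sup'_add {ι : Type*} {s : Finset ι} (hs : s.Nonempty) {f g : ι → ℝ}
    {c : ℝ} (h : ∀ i ∈ s, f i ≤ g i + c) : s.sup' hs f ≤ s.sup' hs g + c :=
  Finset.sup'_le hs f fun i hi => (h i hi).trans (add_le_add_left (Finset.le_sup' g hi) c)

theorem stmt_9_general {S Act E : Type*} [Fintype S] [Nonempty S]
    (A : S → Finset Act) (hA : ∀ s, (A s).Nonempty)
    (r : S → Act → E → ℝ) (γ : ℝ) (hγ0 : 0 ≤ γ)
    (U : S → Act → ((S × E) → ℝ) → ℝ)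
    (hmono : ∀ s, ∀ a ∈ A s, ∀ X Y : (S × E) → ℝ,
      (∀ p, X p ≤ Y p) → U s a X ≤ U s a Y)
    (htrans : ∀ s, ∀ a ∈ A s, ∀ (X : (S × E) → ℝ) (y : ℝ),
      U s a (fun p => X p + y) = U s a X + y)
    (T : (S → ℝ) → S → ℝ)
    (hT : ∀ V s, T V s = (A s).sup' (hA s) fun a => U s a fun p => r s a p.2 + γ * V p.1)
    (V V' : S → ℝ) :
    (Finset.univ.sup' Finset.univ_nonempty fun s => |T V s - T V' s|) ≤
      γ * Finset.univ.sup' Finset.univ_nonempty fun s => |V s - V' s| := by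
  set M := Finset.univ.sup' Finset.univ_nonempty fun s => |V s - V' s|
  have hM : ∀ t, |V t - V' t| ≤ M := fun t =>
    Finset.le_sup' (fun s => |V s - V' s|) (Finset.mem_univ t)
  have one_sided : ∀ W W' : S → ℝ, (∀ t, W t ≤ W' t + M) → ∀ s, T W s ≤ T W' s + γ * M := by
    intro W W' hW s
    rw [hT, hT]
    refine Finset.sup'_le_sup'_add _ fun a ha =>
      Monotone.le_add_of_le_add (hmono s a ha) (htrans s a ha) fun p => ?_
    linarith [mul_le_mul_of_nonneg_left (hW p.1) hγ0]
  refine Finset.sup'_le _ _ fun s _ => abs_sub_le_iff.mpr ⟨?_, ?_⟩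
  · linarith [one_sided V V' (fun t => by linarith [(abs_le.mp (hM t)).2]) s]
  · linarith [one_sided V' V (fun t => by linarith [(abs_le.mp (hM t)).1]) s]

/-- Let `U s a` be monotone and translation invariant for each
admissible state-action pair `(s, a)` (i.e. `a ∈ A s`). Then the operator
`T V s = max_{a ∈ A s} U s a ((s', ε) ↦ r s a ε + γ V s')` is a `γ`-contraction
in the sup-norm. -/
theorem stmt_9 {S Act E : Type*} [Fintype S] [Nonempty S]
    (A : S → Finset Act) (hA : ∀ s, (A s).Nonempty)
    (r : S → Act → E → ℝ) (γ : ℝ) (hγ0 : 0 ≤ γ) (hγ1 : γ < 1)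
    (U : S → Act → ((S × E) → ℝ) → ℝ)
    (hmono : ∀ s, ∀ a ∈ A s, ∀ X Y : (S × E) → ℝ,
      (∀ p, X p ≤ Y p) → U s a X ≤ U s a Y)
    (htrans : ∀ s, ∀ a ∈ A s, ∀ (X : (S × E) → ℝ) (y : ℝ),
      U s a (fun p => X p + y) = U s a X + y)
    (T : (S → ℝ) → S → ℝ)
    (hT : ∀ V s, T V s = (A s).sup' (hA s) fun a => U s a fun p => r s a p.2 + γ * V p.1)
    (V V' : S → ℝ) :
    (Finset.univ.sup' Finset.univ_nonempty fun s => |T V s - T V' s|) ≤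
      γ * Finset.univ.sup' Finset.univ_nonempty fun s => |V s - V' s| :=
  stmt_9_general A hA r γ hγ0 U hmono htrans T hT V V'
end

section
/- Suppose u : ℝ → ℝ satisfies: there exist constants 0 < ε ≤ L such that ε ≤ (u(x) − u(y))/(x − y) ≤ L for all x ≠ y. Let 0 < α ≤ min(1/L, 1), let x₀ ∈ ℝ, and set ũ(x) := u(x) − x₀. Define the operator H on ℝ^K by (Hq)(s,a) = α · Σ_{s'∈S, ε∈E} P(s'|s,a) P_r(ε|s,a) · ũ( r(s,a,ε) + γ max_{a'∈A(s')} q(s',a') − q(s,a) ) + q(s,a). Then for all q, q' : K → ℝ, max_{(s,a)∈K} |(Hq)(s,a) − (Hq')(s,a)| ≤ (1 − α(1−γ)ε) · max_{(s,a)∈K} |q(s,a) − q'(s,a)|, and 1 − α(1−γ)ε ∈ [0, 1). -/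
/-!
Fix an admissible pair `(s, a)` and put `d = q(s,a) − q'(s,a)` and
`m(s') = max_{a'} q(s',a') − max_{a'} q'(s',a')`, both bounded by `M = ‖q − q'‖_∞`.
For each sample `(s', e)` the arguments of `ũ` differ by `γ m(s') − d`, and the slope
condition writes `u x − u y = c (x − y)` with `c ∈ [ε, L]`. The corresponding term of
`Hq − Hq'` is then `α c γ m(s') + (1 − α c) d`, a combination with nonnegative
coefficients (as `α c ≤ α L ≤ 1`) of total weight `1 − α c (1 − γ) ≤ 1 − α (1 − γ) ε`.
Averaging over the probability weights keeps this bound.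
-/

open Finset

theorem Finset.sup'_le_sup'_add_of_le_add {ι : Type*} {s : Finset ι} (hs : s.Nonempty)
    {f g : ι → ℝ} {M : ℝ} (h : ∀ i ∈ s, f i ≤ g i + M) :
    s.sup' hs f ≤ s.sup' hs g + M :=
  sup'_le hs f fun i hi => (h i hi).trans (by gcongr; exact le_sup' g hi)

theorem Finset.abs_sup'_sub_sup'_le {ι : Type*} {s : Finset ι} (hs : s.Nonempty)
    {f g : ι → ℝ} {M : ℝ} (h : ∀ i ∈ s, |f i - g i| ≤ M) :
    |s.sup' hs f - s.sup' hs g| ≤ M := by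
  rw [abs_sub_le_iff, sub_le_iff_le_add, sub_le_iff_le_add, add_comm M, add_comm M]
  constructor <;> apply sup'_le_sup'_add_of_le_add <;> intro i hi
  · linarith [(abs_sub_le_iff.mp (h i hi)).1]
  · linarith [(abs_sub_le_iff.mp (h i hi)).2]

theorem Finset.abs_sum_mul_le_of_sum_eq_one {ι : Type*} {s : Finset ι} {w x : ι → ℝ} {B : ℝ}
    (hw : ∀ i ∈ s, 0 ≤ w i) (hw1 : ∑ i ∈ s, w i = 1) (hx : ∀ i ∈ s, |x i| ≤ B) :
    |∑ i ∈ s, w i * x i| ≤ B :=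
  calc |∑ i ∈ s, w i * x i| ≤ ∑ i ∈ s, w i * |x i| := by
        refine (abs_sum_le_sum_abs _ _).trans (sum_le_sum fun i hi => ?_)
        rw [abs_mul, abs_of_nonneg (hw i hi)]
    _ ≤ ∑ i ∈ s, w i * B := sum_le_sum fun i hi => by gcongr; exacts [hw i hi, hx i hi]
    _ = B := by rw [← sum_mul, hw1, one_mul]

theorem exists_sub_eq_mul_sub_of_slope_bounds {u : ℝ → ℝ} {ε L : ℝ} (hεL : ε ≤ L)
    (hslope : ∀ x y : ℝ, x ≠ y → ε ≤ (u x - u y) / (x - y) ∧ (u x - u y) / (x - y) ≤ L)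
    (x y : ℝ) : ∃ c, ε ≤ c ∧ c ≤ L ∧ u x - u y = c * (x - y) := by
  rcases eq_or_ne x y with rfl | hxy
  · exact ⟨ε, le_rfl, hεL, by simp⟩
  · exact ⟨_, (hslope x y hxy).1, (hslope x y hxy).2,
      (div_mul_cancel₀ _ (sub_ne_zero_of_ne hxy)).symm⟩

theorem abs_mul_mul_sub_add_le {α c γ ε m d M : ℝ} (hα : 0 ≤ α) (hε : 0 ≤ ε) (hεc : ε ≤ c)
    (hαc : α * c ≤ 1) (hγ0 : 0 ≤ γ) (hγ1 : γ ≤ 1) (hm : |m| ≤ M) (hd : |d| ≤ M) :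
    |α * (c * (γ * m - d)) + d| ≤ (1 - α * (1 - γ) * ε) * M := by
  have hc : 0 ≤ c := hε.trans hεc
  have hM : 0 ≤ M := (abs_nonneg d).trans hd
  calc |α * (c * (γ * m - d)) + d| = |α * c * γ * m + (1 - α * c) * d| := by ring_nf
    _ ≤ α * c * γ * |m| + (1 - α * c) * |d| := by
        refine (abs_add_le _ _).trans_eq ?_
        rw [abs_mul (α * c * γ), abs_mul (1 - α * c),
          abs_of_nonneg (by positivity : 0 ≤ α * c * γ),
          abs_of_nonneg (by linarith : 0 ≤ 1 - α * c)]
    _ ≤ α * c * γ * M + (1 - α * c) * M := by gcongr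
    _ = (1 - α * (1 - γ) * c) * M := by ring
    _ ≤ (1 - α * (1 - γ) * ε) * M := by gcongr

theorem abs_mul_sub_add_le_of_slope_bounds {u : ℝ → ℝ} {ε L α γ m d M x y : ℝ}
    (hslope : ∀ x y : ℝ, x ≠ y → ε ≤ (u x - u y) / (x - y) ∧ (u x - u y) / (x - y) ≤ L)
    (hε : 0 ≤ ε) (hεL : ε ≤ L) (hα : 0 ≤ α) (hαL : α * L ≤ 1) (hγ0 : 0 ≤ γ) (hγ1 : γ ≤ 1)
    (hm : |m| ≤ M) (hd : |d| ≤ M) (hxy : x - y = γ * m - d) :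
    |α * (u x - u y) + d| ≤ (1 - α * (1 - γ) * ε) * M := by
  obtain ⟨c, hεc, hcL, huc⟩ := exists_sub_eq_mul_sub_of_slope_bounds hεL hslope x y
  rw [huc, hxy]
  exact abs_mul_mul_sub_add_le hα hε hεc
    ((mul_le_mul_of_nonneg_left hcL hα).trans hαL) hγ0 hγ1 hm hd

theorem sub_eq_sum_mul_sum_mul {S E : Type*} {s : Finset S} {t : Finset E} {p : S → ℝ}
    {w : E → ℝ} (hp : ∑ i ∈ s, p i = 1) (hw : ∑ j ∈ t, w j = 1) (α c a b : ℝ)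
    (f g : S → E → ℝ) :
    α * (∑ i ∈ s, ∑ j ∈ t, p i * w j * (f i j - c)) + a -
        (α * (∑ i ∈ s, ∑ j ∈ t, p i * w j * (g i j - c)) + b) =
      ∑ i ∈ s, p i * ∑ j ∈ t, w j * (α * (f i j - g i j) + (a - b)) := by
  have hpw : ∑ i ∈ s, ∑ j ∈ t, p i * w j = 1 := by
    rw [← sum_mul_sum, hp, hw, one_mul]
  have hterm : ∀ i j, p i * (w j * (α * (f i j - g i j) + (a - b))) =
      α * (p i * w j * (f i j - c)) - α * (p i * w j * (g i j - c)) + p i * w j * (a - b) :=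
    fun i j => by ring
  simp only [mul_sum, hterm, sum_add_distrib, sum_sub_distrib, ← sum_mul, hpw]
  ring

theorem stmt_10_general {S Act E : Type*} [Fintype S] [Fintype E]
    (A : S → Finset Act) (hA : ∀ s, (A s).Nonempty)
    (P : S → Act → S → ℝ) (Pr : S → Act → E → ℝ) (r : S → Act → E → ℝ)
    (hP0 : ∀ s a s', 0 ≤ P s a s') (hP1 : ∀ s, ∀ a ∈ A s, ∑ s', P s a s' = 1)
    (hPr0 : ∀ s a e, 0 ≤ Pr s a e) (hPr1 : ∀ s, ∀ a ∈ A s, ∑ e, Pr s a e = 1)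
    (γ : ℝ) (hγ0 : 0 ≤ γ) (hγ1 : γ < 1)
    (u : ℝ → ℝ) (ε L : ℝ) (hε : 0 < ε) (hεL : ε ≤ L)
    (hslope : ∀ x y : ℝ, x ≠ y → ε ≤ (u x - u y) / (x - y) ∧ (u x - u y) / (x - y) ≤ L)
    (α : ℝ) (hα0 : 0 < α) (hα : α ≤ min (1 / L) 1) (x₀ : ℝ)
    (H : (S → Act → ℝ) → S → Act → ℝ)
    (hH : ∀ q s a, H q s a = α * (∑ s', ∑ e, P s a s' * Pr s a e *
        (u (r s a e + γ * (A s').sup' (hA s') (q s') - q s a) - x₀)) + q s a)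
    (q q' : S → Act → ℝ)
    (hK : ((Finset.univ : Finset S).sigma fun s => A s).Nonempty) :
    ((((Finset.univ : Finset S).sigma fun s => A s).sup' hK
        fun p => |H q p.1 p.2 - H q' p.1 p.2|) ≤
      (1 - α * (1 - γ) * ε) *
        (((Finset.univ : Finset S).sigma fun s => A s).sup' hK
          fun p => |q p.1 p.2 - q' p.1 p.2|)) ∧
    0 ≤ 1 - α * (1 - γ) * ε ∧ 1 - α * (1 - γ) * ε < 1 := by
  have hαL : α * L ≤ 1 := (le_div_iff₀ (hε.trans_le hεL)).mp (hα.trans (min_le_left _ _))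
  have hαε : α * ε ≤ 1 := (mul_le_mul_of_nonneg_left hεL hα0.le).trans hαL
  have hdiscount : 0 < α * (1 - γ) * ε := mul_pos (mul_pos hα0 (sub_pos.2 hγ1)) hε
  refine ⟨?_, by nlinarith [mul_nonneg hγ0 (mul_pos hα0 hε).le], by linarith⟩
  set M := ((univ : Finset S).sigma fun s => A s).sup' hK fun p => |q p.1 p.2 - q' p.1 p.2|
  have hqM : ∀ s, ∀ a ∈ A s, |q s a - q' s a| ≤ M := fun s a ha =>
    le_sup' (fun p : Σ _ : S, Act => |q p.1 p.2 - q' p.1 p.2|)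
      (mem_sigma.2 ⟨mem_univ s, ha⟩ : (⟨s, a⟩ : Σ _ : S, Act) ∈ _)
  refine sup'_le hK _ fun ⟨s, a⟩ hsa => ?_
  have ha : a ∈ A s := (mem_sigma.1 hsa).2
  rw [hH, hH, sub_eq_sum_mul_sum_mul (hP1 s a ha) (hPr1 s a ha)]
  refine abs_sum_mul_le_of_sum_eq_one (fun s' _ => hP0 s a s') (hP1 s a ha) fun s' _ => ?_
  refine abs_sum_mul_le_of_sum_eq_one (fun e _ => hPr0 s a e) (hPr1 s a ha) fun e _ => ?_
  exact abs_mul_sub_add_le_of_slope_bounds hslope hε.le hεL hα0.le hαL hγ0 hγ1.le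
    (abs_sup'_sub_sup'_le (hA s') (hqM s')) (hqM s a ha) (by ring)

/-- For a utility `u` with slopes in `[ε, L]` (`0 < ε ≤ L`),
a step size `0 < α ≤ min (1/L) 1` and `ũ x = u x − x₀`, the operator
`(Hq)(s,a) = α ∑_{s',e} P(s'|s,a) P_r(e|s,a) ũ(r(s,a,e) + γ max_{a' ∈ A s'} q(s',a') − q(s,a)) + q(s,a)`
is a contraction with modulus `1 − α(1−γ)ε ∈ [0,1)` in the sup-norm over the set `K`
of admissible state-action pairs. -/
theorem stmt_10 {S Act E : Type*} [Fintype S] [Nonempty S] [Fintype Act] [Fintype E]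
    (A : S → Finset Act) (hA : ∀ s, (A s).Nonempty)
    (P : S → Act → S → ℝ) (Pr : S → Act → E → ℝ) (r : S → Act → E → ℝ)
    (hP0 : ∀ s a s', 0 ≤ P s a s') (hP1 : ∀ s, ∀ a ∈ A s, ∑ s', P s a s' = 1)
    (hPr0 : ∀ s a e, 0 ≤ Pr s a e) (hPr1 : ∀ s, ∀ a ∈ A s, ∑ e, Pr s a e = 1)
    (γ : ℝ) (hγ0 : 0 ≤ γ) (hγ1 : γ < 1)
    (u : ℝ → ℝ) (ε L : ℝ) (hε : 0 < ε) (hεL : ε ≤ L)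
    (hslope : ∀ x y : ℝ, x ≠ y → ε ≤ (u x - u y) / (x - y) ∧ (u x - u y) / (x - y) ≤ L)
    (α : ℝ) (hα0 : 0 < α) (hα : α ≤ min (1 / L) 1) (x₀ : ℝ)
    (H : (S → Act → ℝ) → S → Act → ℝ)
    (hH : ∀ q s a, H q s a = α * (∑ s', ∑ e, P s a s' * Pr s a e *
        (u (r s a e + γ * (A s').sup' (hA s') (q s') - q s a) - x₀)) + q s a)
    (q q' : S → Act → ℝ)
    (hK : ((Finset.univ : Finset S).sigma fun s => A s).Nonempty) :
    ((((Finset.univ : Finset S).sigma fun s => A s).sup' hK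
        fun p => |H q p.1 p.2 - H q' p.1 p.2|) ≤
      (1 - α * (1 - γ) * ε) *
        (((Finset.univ : Finset S).sigma fun s => A s).sup' hK
          fun p => |q p.1 p.2 - q' p.1 p.2|)) ∧
    0 ≤ 1 - α * (1 - γ) * ε ∧ 1 - α * (1 - γ) * ε < 1 :=
  stmt_10_general A hA P Pr r hP0 hP1 hPr0 hPr1 γ hγ0 hγ1 u ε L hε hεL hslope α hα0 hα x₀ H hH q q'
    hK
end

section
/- Suppose u : ℝ → ℝ is strictly increasing with u(y₀) = x₀ for some y₀ ∈ ℝ, the rewards are bounded by R̄ := sup_{(s,a)∈K, ε∈E} |r(s,a,ε)| < ∞, and γ ∈ [0,1). Then every solution Q : K → ℝ of the risk-sensitive optimality equation Σ_{s'∈S, ε∈E} P(s'|s,a) P_r(ε|s,a) · u( r(s,a,ε) + γ max_{a'∈A(s')} Q(s',a') − Q(s,a) ) = x₀ for all (s,a) ∈ K satisfies (−R̄ − y₀)/(1−γ) ≤ Q(s,a) ≤ (R̄ − y₀)/(1−γ) for all (s,a) ∈ K. -/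
/-!
At a maximiser `(s, a)` of `Q`, the optimality equation says that a `u`-average of the
residuals `r + γ V(s') - Q(s, a)` equals `u y₀`; since `u` is strictly increasing, some residual
with positive probability is at least `y₀`. As `V(s') ≤ Q(s, a)` and `r ≤ R̄`, this gives
`Q(s, a) ≤ R̄ - y₀ + γ Q(s, a)`. The lower bound is the mirror argument at a minimiser.
-/

open Finset

lemma exists_pos_le_of_sum_mul_eq {ι : Type*} [Fintype ι] {w : ι → ℝ} (hw0 : ∀ i, 0 ≤ w i)
    (hw1 : ∑ i, w i = 1) {u : ℝ → ℝ} (hu : StrictMono u) {f : ι → ℝ} {y : ℝ}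
    (h : ∑ i, w i * u (f i) = u y) : ∃ i, 0 < w i ∧ y ≤ f i := by
  by_contra! hlt
  obtain ⟨j, -, hj⟩ : ∃ j ∈ univ, (0 : ℝ) < w j :=
    exists_lt_of_sum_lt (by simp [hw1])
  have : ∑ i, w i * u (f i) < ∑ i, w i * u y := by
    refine sum_lt_sum (fun i _ => ?_) ⟨j, mem_univ j, ?_⟩
    · rcases (hw0 i).eq_or_lt with hi | hi
      · simp [← hi]
      · exact mul_le_mul_of_nonneg_left (hu (hlt i hi)).le hi.le
    · exact mul_lt_mul_of_pos_left (hu (hlt j hj)) hj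
  rw [← sum_mul, hw1, one_mul, h] at this
  exact this.false

lemma exists_pos_ge_of_sum_mul_eq {ι : Type*} [Fintype ι] {w : ι → ℝ} (hw0 : ∀ i, 0 ≤ w i)
    (hw1 : ∑ i, w i = 1) {u : ℝ → ℝ} (hu : StrictMono u) {f : ι → ℝ} {y : ℝ}
    (h : ∑ i, w i * u (f i) = u y) : ∃ i, 0 < w i ∧ f i ≤ y := by
  have hu' : StrictMono fun x => -u (-x) := fun x y hxy => neg_lt_neg (hu (neg_lt_neg hxy))
  obtain ⟨i, hi, hle⟩ := exists_pos_le_of_sum_mul_eq (f := fun i => -f i) (y := -y) hw0 hw1 hu'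
    (by simp [mul_neg, sum_neg_distrib, h])
  exact ⟨i, hi, neg_le_neg_iff.1 hle⟩

lemma exists_le_and_exists_ge_of_sum_sum_mul_eq {α β : Type*} [Fintype α] [Fintype β]
    {p : α → ℝ} {q : β → ℝ} (hp0 : ∀ a, 0 ≤ p a) (hp1 : ∑ a, p a = 1)
    (hq0 : ∀ b, 0 ≤ q b) (hq1 : ∑ b, q b = 1) {u : ℝ → ℝ} (hu : StrictMono u)
    {g : α → β → ℝ} {y : ℝ} (h : ∑ a, ∑ b, p a * q b * u (g a b) = u y) :
    (∃ a b, y ≤ g a b) ∧ ∃ a b, g a b ≤ y := by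
  have hw0 : ∀ x : α × β, 0 ≤ p x.1 * q x.2 := fun x => mul_nonneg (hp0 x.1) (hq0 x.2)
  have hw1 : ∑ x : α × β, p x.1 * q x.2 = 1 := by
    rw [Fintype.sum_prod_type, ← sum_mul_sum, hp1, hq1, one_mul]
  have hsum : ∑ x : α × β, p x.1 * q x.2 * u (g x.1 x.2) = u y := by
    rw [Fintype.sum_prod_type, h]
  obtain ⟨⟨a, b⟩, -, hab⟩ := exists_pos_le_of_sum_mul_eq hw0 hw1 hu hsum
  obtain ⟨⟨a', b'⟩, -, hab'⟩ := exists_pos_ge_of_sum_mul_eq hw0 hw1 hu hsum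
  exact ⟨⟨a, b, hab⟩, ⟨a', b', hab'⟩⟩

section Optimality

variable {S Act E : Type*} [Fintype S] [Fintype E] {A : S → Finset Act}
  {P : S → Act → S → ℝ} {Pr : S → Act → E → ℝ} {r : S → Act → E → ℝ} {γ : ℝ} {u : ℝ → ℝ}
  {y₀ Rbar : ℝ} {Q : S → Act → ℝ} {s : S} {a : Act}

lemma le_div_of_optimality_of_isMax (hA : ∀ s, (A s).Nonempty) (hP0 : ∀ s', 0 ≤ P s a s')
    (hP1 : ∑ s', P s a s' = 1) (hPr0 : ∀ e, 0 ≤ Pr s a e) (hPr1 : ∑ e, Pr s a e = 1)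
    (hγ0 : 0 ≤ γ) (hγ1 : γ < 1) (hu : StrictMono u) (hRbar : ∀ e, |r s a e| ≤ Rbar)
    (hQ : ∑ s', ∑ e, P s a s' * Pr s a e *
      u (r s a e + γ * (A s').sup' (hA s') (Q s') - Q s a) = u y₀)
    (hmax : ∀ s', ∀ a' ∈ A s', Q s' a' ≤ Q s a) :
    Q s a ≤ (Rbar - y₀) / (1 - γ) := by
  obtain ⟨s', e, hres⟩ :=
    (exists_le_and_exists_ge_of_sum_sum_mul_eq hP0 hP1 hPr0 hPr1 hu hQ).1
  have hV : γ * (A s').sup' (hA s') (Q s') ≤ γ * Q s a :=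
    mul_le_mul_of_nonneg_left (sup'_le _ _ (hmax s')) hγ0
  have hr : r s a e ≤ Rbar := (abs_le.1 (hRbar e)).2
  rw [le_div_iff₀ (sub_pos.2 hγ1)]
  linarith

lemma div_le_of_optimality_of_isMin (hA : ∀ s, (A s).Nonempty) (hP0 : ∀ s', 0 ≤ P s a s')
    (hP1 : ∑ s', P s a s' = 1) (hPr0 : ∀ e, 0 ≤ Pr s a e) (hPr1 : ∑ e, Pr s a e = 1)
    (hγ0 : 0 ≤ γ) (hγ1 : γ < 1) (hu : StrictMono u) (hRbar : ∀ e, |r s a e| ≤ Rbar)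
    (hQ : ∑ s', ∑ e, P s a s' * Pr s a e *
      u (r s a e + γ * (A s').sup' (hA s') (Q s') - Q s a) = u y₀)
    (hmin : ∀ s', ∀ a' ∈ A s', Q s a ≤ Q s' a') :
    (-Rbar - y₀) / (1 - γ) ≤ Q s a := by
  obtain ⟨s', e, hres⟩ :=
    (exists_le_and_exists_ge_of_sum_sum_mul_eq hP0 hP1 hPr0 hPr1 hu hQ).2
  have hV : γ * Q s a ≤ γ * (A s').sup' (hA s') (Q s') := by
    obtain ⟨a', ha'⟩ := hA s'
    exact mul_le_mul_of_nonneg_left (le_sup'_of_le _ ha' (hmin s' a' ha')) hγ0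
  have hr : -Rbar ≤ r s a e := (abs_le.1 (hRbar e)).1
  rw [div_le_iff₀ (sub_pos.2 hγ1)]
  linarith

end Optimality

theorem stmt_13_general {S Act E : Type*} [Fintype S] [Fintype E]
    (A : S → Finset Act) (hA : ∀ s, (A s).Nonempty)
    (P : S → Act → S → ℝ) (Pr : S → Act → E → ℝ) (r : S → Act → E → ℝ)
    (hP0 : ∀ s a s', 0 ≤ P s a s') (hP1 : ∀ s, ∀ a ∈ A s, ∑ s', P s a s' = 1)
    (hPr0 : ∀ s a e, 0 ≤ Pr s a e) (hPr1 : ∀ s, ∀ a ∈ A s, ∑ e, Pr s a e = 1)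
    (γ : ℝ) (hγ0 : 0 ≤ γ) (hγ1 : γ < 1)
    (u : ℝ → ℝ) (hu_mono : StrictMono u) (y₀ x₀ : ℝ) (hy₀ : u y₀ = x₀)
    (Rbar : ℝ) (hRbar : ∀ s, ∀ a ∈ A s, ∀ e : E, |r s a e| ≤ Rbar)
    (Q : S → Act → ℝ)
    (hQ : ∀ s, ∀ a ∈ A s, ∑ s', ∑ e, P s a s' * Pr s a e *
      u (r s a e + γ * (A s').sup' (hA s') (Q s') - Q s a) = x₀) :
    ∀ s, ∀ a ∈ A s, (-Rbar - y₀) / (1 - γ) ≤ Q s a ∧ Q s a ≤ (Rbar - y₀) / (1 - γ) := by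
  subst hy₀
  intro s a ha
  have hK : (univ.sigma A).Nonempty := ⟨⟨s, a⟩, mem_sigma.2 ⟨mem_univ s, ha⟩⟩
  obtain ⟨⟨s₁, a₁⟩, h₁, hmax⟩ := exists_max_image _ (fun x => Q x.1 x.2) hK
  obtain ⟨⟨s₂, a₂⟩, h₂, hmin⟩ := exists_min_image _ (fun x => Q x.1 x.2) hK
  rw [mem_sigma] at h₁ h₂
  have hmax' : ∀ s', ∀ a' ∈ A s', Q s' a' ≤ Q s₁ a₁ :=
    fun s' a' ha' => hmax ⟨s', a'⟩ (mem_sigma.2 ⟨mem_univ s', ha'⟩)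
  have hmin' : ∀ s', ∀ a' ∈ A s', Q s₂ a₂ ≤ Q s' a' :=
    fun s' a' ha' => hmin ⟨s', a'⟩ (mem_sigma.2 ⟨mem_univ s', ha'⟩)
  have hlower := div_le_of_optimality_of_isMin hA (hP0 s₂ a₂) (hP1 s₂ a₂ h₂.2) (hPr0 s₂ a₂)
    (hPr1 s₂ a₂ h₂.2) hγ0 hγ1 hu_mono (hRbar s₂ a₂ h₂.2) (hQ s₂ a₂ h₂.2) hmin'
  have hupper := le_div_of_optimality_of_isMax hA (hP0 s₁ a₁) (hP1 s₁ a₁ h₁.2) (hPr0 s₁ a₁)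
    (hPr1 s₁ a₁ h₁.2) hγ0 hγ1 hu_mono (hRbar s₁ a₁ h₁.2) (hQ s₁ a₁ h₁.2) hmax'
  exact ⟨hlower.trans (hmin' s a ha), (hmax' s a ha).trans hupper⟩

/-- If `u` is strictly increasing with `u y₀ = x₀`, the rewards are
bounded in absolute value by `Rbar`, and `γ ∈ [0,1)`, then every solution `Q` of the
risk-sensitive optimality equation satisfies
`(−Rbar − y₀)/(1−γ) ≤ Q(s,a) ≤ (Rbar − y₀)/(1−γ)` for all admissible `(s,a)`. -/
theorem stmt_13 {S Act E : Type*} [Fintype S] [Nonempty S] [Fintype Act] [Fintype E]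
    [Nonempty E]
    (A : S → Finset Act) (hA : ∀ s, (A s).Nonempty)
    (P : S → Act → S → ℝ) (Pr : S → Act → E → ℝ) (r : S → Act → E → ℝ)
    (hP0 : ∀ s a s', 0 ≤ P s a s') (hP1 : ∀ s, ∀ a ∈ A s, ∑ s', P s a s' = 1)
    (hPr0 : ∀ s a e, 0 ≤ Pr s a e) (hPr1 : ∀ s, ∀ a ∈ A s, ∑ e, Pr s a e = 1)
    (γ : ℝ) (hγ0 : 0 ≤ γ) (hγ1 : γ < 1)
    (u : ℝ → ℝ) (hu_mono : StrictMono u) (y₀ x₀ : ℝ) (hy₀ : u y₀ = x₀)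
    (Rbar : ℝ) (hRbar : ∀ s, ∀ a ∈ A s, ∀ e : E, |r s a e| ≤ Rbar)
    (Q : S → Act → ℝ)
    (hQ : ∀ s, ∀ a ∈ A s, ∑ s', ∑ e, P s a s' * Pr s a e *
      u (r s a e + γ * (A s').sup' (hA s') (Q s') - Q s a) = x₀) :
    ∀ s, ∀ a ∈ A s, (-Rbar - y₀) / (1 - γ) ≤ Q s a ∧ Q s a ≤ (Rbar - y₀) / (1 - γ) :=
  stmt_13_general A hA P Pr r hP0 hP1 hPr0 hPr1 γ hγ0 hγ1 u hu_mono y₀ x₀ hy₀ Rbar hRbar Q hQ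
end
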